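/- If H is a K_4-free graph that vertex-arrows (K_{1,1,2}, K_{1,2,2}), then the join G = K_1 + H is K_5-free and edge-arrows (K_3, J_4). Consequently F_e(K_3, J_4; 5) ≤ 1 + F_v(K_{1,1,2}, K_{1,2,2}; 4). -/

import Mathlib

open SimpleGraph

/-- `Copies G F S`: `G` contains a copy of `F` all of whose vertices lie in `S`. -/
def Copies {α β : Type*} (G : SimpleGraph α) (F : SimpleGraph β) (S : Set α) : Prop :=
  ∃ f : β ↪ α, (∀ a b, F.Adj a b → G.Adj (f a) (f b)) ∧ ∀ a, f a ∈ S

/-- `G` vertex-arrows the family `F` of graphs. -/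
def VArrows {α : Type*} (G : SimpleGraph α) {r : ℕ} {β : Fin r → Type*}
    (F : ∀ i, SimpleGraph (β i)) : Prop :=
  ∀ C : α → Fin r, ∃ i, Copies G (F i) {v | C v = i}

/-- `G` vertex-arrows `(F1, F2)`. -/
def VArrows2 {α β γ : Type*} (G : SimpleGraph α) (F1 : SimpleGraph β) (F2 : SimpleGraph γ) :
    Prop :=
  ∀ C : α → Bool, Copies G F1 {v | C v = true} ∨ Copies G F2 {v | C v = false}

/-- `G` edge-arrows `(F1, F2)`: every red subgraph `R ≤ G` yields a red `F1` or a blue `F2`. -/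
def EArrows2 {α β γ : Type*} (G : SimpleGraph α) (F1 : SimpleGraph β) (F2 : SimpleGraph γ) :
    Prop :=
  ∀ R : SimpleGraph α, R ≤ G → Copies R F1 Set.univ ∨ Copies (G \ R) F2 Set.univ

/-- Vertex Folkman number for a family of target graphs. -/
noncomputable def Fv {r : ℕ} {β : Fin r → Type*} (F : ∀ i, SimpleGraph (β i)) (k : ℕ) : ℕ :=
  sInf {n | ∃ G : SimpleGraph (Fin n), G.CliqueFree k ∧ VArrows G F}

/-- Two-color vertex Folkman number. -/
noncomputable def Fv2 {β γ : Type*} (F1 : SimpleGraph β) (F2 : SimpleGraph γ) (k : ℕ) : ℕ :=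
  sInf {n | ∃ G : SimpleGraph (Fin n), G.CliqueFree k ∧ VArrows2 G F1 F2}

/-- Two-color edge Folkman number. -/
noncomputable def Fe2 {β γ : Type*} (F1 : SimpleGraph β) (F2 : SimpleGraph γ) (k : ℕ) : ℕ :=
  sInf {n | ∃ G : SimpleGraph (Fin n), G.CliqueFree k ∧ EArrows2 G F1 F2}

/-- Lexicographic product `G[H]`. -/
def lexProd {α β : Type*} (G : SimpleGraph α) (H : SimpleGraph β) : SimpleGraph (α × β) where
  Adj x y := G.Adj x.1 y.1 ∨ (x.1 = y.1 ∧ H.Adj x.2 y.2)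
  symm := ⟨by rintro x y (h | ⟨e, h⟩); exacts [Or.inl h.symm, Or.inr ⟨e.symm, h.symm⟩]⟩
  loopless := ⟨by rintro x (h | ⟨_, h⟩); exacts [G.loopless.irrefl _ h, H.loopless.irrefl _ h]⟩

/-- Complete graph on `k` vertices. -/
def Kc (k : ℕ) : SimpleGraph (Fin k) := completeGraph (Fin k)

/-- `J_k = K_k - e`: complete graph on `k` vertices minus one edge (the one
joining the two distinguished right-hand vertices). -/
def Jgraph (k : ℕ) : SimpleGraph (Fin (k - 2) ⊕ Fin 2) where
  Adj x y := x ≠ y ∧ ¬(x.isRight ∧ y.isRight)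
  symm := ⟨fun x y ⟨h1, h2⟩ => ⟨h1.symm, fun ⟨a, b⟩ => h2 ⟨b, a⟩⟩⟩
  loopless := ⟨fun x h => h.1 rfl⟩

/-- Cycle on `n` vertices. -/
def cycle (n : ℕ) : SimpleGraph (ZMod n) where
  Adj i j := i ≠ j ∧ (i - j = 1 ∨ j - i = 1)
  symm := ⟨fun i j ⟨h1, h2⟩ => ⟨h1.symm, h2.symm⟩⟩
  loopless := ⟨fun i h => h.1 rfl⟩

/-- Join of two graphs: disjoint union plus all cross edges. -/
def graphJoin {α β : Type*} (G : SimpleGraph α) (H : SimpleGraph β) :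
    SimpleGraph (α ⊕ β) where
  Adj x y := (∃ a b, x = .inl a ∧ y = .inl b ∧ G.Adj a b) ∨
             (∃ a b, x = .inr a ∧ y = .inr b ∧ H.Adj a b) ∨
             (x.isLeft ∧ y.isRight) ∨ (x.isRight ∧ y.isLeft)
  symm := by
    constructor
    rintro x y (⟨a, b, rfl, rfl, h⟩ | ⟨a, b, rfl, rfl, h⟩ | ⟨h1, h2⟩ | ⟨h1, h2⟩)
    · exact Or.inl ⟨b, a, rfl, rfl, h.symm⟩
    · exact Or.inr (Or.inl ⟨b, a, rfl, rfl, h.symm⟩)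
    · exact Or.inr (Or.inr (Or.inr ⟨h2, h1⟩))
    · exact Or.inr (Or.inr (Or.inl ⟨h2, h1⟩))
  loopless := by
    constructor
    rintro x (⟨a, b, rfl, h, h'⟩ | ⟨a, b, rfl, h, h'⟩ | ⟨h1, h2⟩ | ⟨h1, h2⟩)
    · cases h; exact G.loopless.irrefl _ h'
    · cases h; exact H.loopless.irrefl _ h'
    · cases x <;> simp_all
    · cases x <;> simp_all

/-- Clique number: the largest size of a clique. -/
noncomputable def cliqueNum' {α : Type*} (G : SimpleGraph α) : ℕ :=
  sSup {n | ∃ s : Finset α, G.IsNClique n s}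

/-!
Colour each vertex `v` of `H` by the colour of the edge joining it to the apex `u` of `K₁ + H`.
A red `K_{1,1,2}` either contains a red edge, which closes a red triangle with `u`, or is entirely
blue, and `K_{1,1,2}` is `J₄`. A blue `K_{1,2,2}` contains a red triangle or a blue `J₃`, because
`K_{1,2,2}` edge-arrows `(K₃, J₃)`; together with `u` a blue `J₃` spans a blue `J₄ = K₁ + J₃`.
The bound on Folkman numbers follows by applying this to a graph of order
`F_v(K_{1,1,2}, K_{1,2,2}; 4)`.
-/

section Copies

variable {α β γ : Type*} {G : SimpleGraph α} {F : SimpleGraph β} {S T : Set α}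

theorem copies_univ_iff_isContained : Copies G F Set.univ ↔ F ⊑ G :=
  ⟨fun ⟨f, hf, _⟩ => ⟨⟨⟨f, hf _ _⟩, f.injective⟩⟩,
    fun ⟨φ⟩ => ⟨φ.toEmbedding, fun _ _ h => φ.toHom.map_adj h, fun _ => trivial⟩⟩

theorem Copies.mono_set (h : Copies G F S) (hST : S ⊆ T) : Copies G F T :=
  let ⟨f, hf, hS⟩ := h
  ⟨f, hf, fun a => hST (hS a)⟩

theorem Copies.map {H : SimpleGraph γ} {S : Set γ} (φ : G.Copy H) (h : Copies G F (φ ⁻¹' S)) :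
    Copies H F S :=
  let ⟨f, hf, hS⟩ := h
  ⟨f.trans φ.toEmbedding, fun _ _ hab => φ.toHom.map_adj (hf _ _ hab), hS⟩

theorem Copies.of_isContained {F' : SimpleGraph γ} (hF : F' ⊑ F) (h : Copies G F S) :
    Copies G F' S :=
  let ⟨φ⟩ := hF
  let ⟨f, hf, hS⟩ := h
  ⟨φ.toEmbedding.trans f, fun _ _ hab => hf _ _ (φ.toHom.map_adj hab), fun _ => hS _⟩

theorem Copies.exists_adj_or_sdiff (h : Copies G F S) (R : SimpleGraph α) :
    (∃ x ∈ S, ∃ y ∈ S, R.Adj x y) ∨ Copies (G \ R) F S := by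
  obtain ⟨f, hf, hS⟩ := h
  by_cases hR : ∃ a b, F.Adj a b ∧ R.Adj (f a) (f b)
  · obtain ⟨a, b, -, hab⟩ := hR
    exact .inl ⟨f a, hS a, f b, hS b, hab⟩
  · push Not at hR
    exact .inr ⟨f, fun a b hab => ⟨hf a b hab, hR a b hab⟩, hS⟩

theorem EArrows2.copies_of_copies {δ : Type*} {A : SimpleGraph γ} {B : SimpleGraph δ}
    (hF : EArrows2 F A B) (h : Copies G F S) (R : SimpleGraph α) :
    Copies R A S ∨ Copies (G \ R) B S := by
  obtain ⟨f, hf, hS⟩ := h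
  rcases hF (R.comap f ⊓ F) inf_le_right with ⟨g, hg, -⟩ | ⟨g, hg, -⟩
  · exact .inl ⟨g.trans f, fun a b hab => (hg a b hab).1, fun a => hS (g a)⟩
  · refine .inr ⟨g.trans f, fun a b hab => ?_, fun a => hS (g a)⟩
    obtain ⟨hF, hR⟩ := hg a b hab
    exact ⟨hf _ _ hF, fun h => hR ⟨h, hF⟩⟩

end Copies

section GraphJoin

variable {ι α β : Type*} {K : SimpleGraph ι} {H : SimpleGraph α}

@[simp] theorem graphJoin_adj_inl_inl {a b : ι} :
    (graphJoin K H).Adj (.inl a) (.inl b) ↔ K.Adj a b := by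
  simp [graphJoin]

@[simp] theorem graphJoin_adj_inr_inr {a b : α} :
    (graphJoin K H).Adj (.inr a) (.inr b) ↔ H.Adj a b := by
  simp [graphJoin]

@[simp] theorem graphJoin_adj_inl_inr (a : ι) (b : α) : (graphJoin K H).Adj (.inl a) (.inr b) :=
  .inr <| .inr <| .inl ⟨rfl, rfl⟩

@[simp] theorem graphJoin_adj_inr_inl (a : α) (b : ι) : (graphJoin K H).Adj (.inr a) (.inl b) :=
  (graphJoin_adj_inl_inr b a).symm

theorem SimpleGraph.CliqueFree.card_lt_of_isClique {G : SimpleGraph α} {k : ℕ}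
    (hG : G.CliqueFree k) {t : Finset α} (ht : G.IsClique (t : Set α)) : t.card < k := by
  by_contra! hk
  obtain ⟨t', ht', hcard⟩ := Finset.exists_subset_card_eq hk
  exact hG t' ⟨ht.subset (by simpa using ht'), hcard⟩

theorem SimpleGraph.CliqueFree.graphJoin {m n : ℕ} (hK : K.CliqueFree m) (hH : H.CliqueFree n) :
    (graphJoin K H).CliqueFree (m + n - 1) := by
  intro s hs
  have hl : s.toLeft.card < m := hK.card_lt_of_isClique fun a ha b hb hab =>
    graphJoin_adj_inl_inl.1 (hs.1 (Finset.mem_toLeft.1 ha) (Finset.mem_toLeft.1 hb) (by simpa))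
  have hr : s.toRight.card < n := hH.card_lt_of_isClique fun a ha b hb hab =>
    graphJoin_adj_inr_inr.1 (hs.1 (Finset.mem_toRight.1 ha) (Finset.mem_toRight.1 hb) (by simpa))
  have := Finset.card_toLeft_add_card_toRight (u := s)
  have := hs.2
  omega

theorem Copies.graphJoin_isContained {V : Type*} {B : SimpleGraph V} {F : SimpleGraph β} {u : V}
    (h : Copies B F (B.neighborSet u)) : graphJoin (Kc 1) F ⊑ B := by
  obtain ⟨f, hf, hu⟩ := h
  refine ⟨⟨⟨Sum.elim (fun _ => u) f, ?_⟩, ?_⟩⟩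
  · rintro (a | a) (b | b) hab
    · exact absurd hab (by simp [Kc, Subsingleton.elim a b])
    · exact hu b
    · exact (hu a).symm
    · exact hf a b (graphJoin_adj_inr_inr.1 hab)
  · refine Function.injective_of_subsingleton _ |>.sumElim f.injective fun _ b h => ?_
    exact B.loopless.irrefl u (h ▸ hu b)

end GraphJoin

section Small

variable {V : Type*} {G : SimpleGraph V}

theorem kc_three_isContained_of_adj {x y z : V} (hxy : G.Adj x y) (hxz : G.Adj x z)
    (hyz : G.Adj y z) : Kc 3 ⊑ G := by
  classical
  exact (not_cliqueFree_iff_top_isContained 3).1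
    (is3Clique_triple_iff.2 ⟨hxy, hxz, hyz⟩).not_cliqueFree

theorem copies_jgraph_two {S : Set V} {x y : V} (hxy : x ≠ y) (hx : x ∈ S) (hy : y ∈ S) :
    Copies G (Jgraph 2) S := by
  refine ⟨⟨Sum.elim Fin.elim0 ![x, y], ?_⟩, ?_, ?_⟩
  · rintro (a | a) (b | b) h
    · exact a.elim0
    · exact a.elim0
    · exact b.elim0
    · fin_cases a <;> fin_cases b <;> simp_all [hxy.symm]
  · rintro (a | a) (b | b) ⟨-, h⟩
    · exact a.elim0
    · exact a.elim0
    · exact b.elim0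
    · simp at h
  · rintro (a | a)
    · exact a.elim0
    · fin_cases a <;> simpa

theorem jgraph_add_three_isContained_graphJoin (k : ℕ) :
    Jgraph (k + 3) ⊑ graphJoin (Kc 1) (Jgraph (k + 2)) := by
  refine ⟨⟨⟨Sum.elim (Fin.cases (.inl 0) (.inr ∘ .inl)) (.inr ∘ .inr), ?_⟩, ?_⟩⟩
  · rintro (a | a) (b | b) ⟨hab, hr⟩
    · cases a using Fin.cases <;> cases b using Fin.cases <;> simp_all [Jgraph]
    · cases a using Fin.cases <;> simp [Jgraph]
    · cases b using Fin.cases <;> simp [Jgraph]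
    · simp_all
  · rintro (a | a) (b | b) h
    · cases a using Fin.cases <;> cases b using Fin.cases <;> simp_all
    · cases a using Fin.cases <;> simp_all
    · cases b using Fin.cases <;> simp_all
    · simpa using h

theorem jgraph_three_isContained_of_adj {v x y : V} (hx : G.Adj v x) (hy : G.Adj v y)
    (hxy : x ≠ y) : Jgraph 3 ⊑ G :=
  (jgraph_add_three_isContained_graphJoin 0).trans
    (copies_jgraph_two (G := G) (S := G.neighborSet v) hxy hx hy).graphJoin_isContained

theorem kc_one_cliqueFree_two : (Kc 1).CliqueFree 2 :=
  cliqueFree_of_card_lt (by simp)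

end Small

local notation "K₁₁₂" => completeMultipartiteGraph (fun i : Fin 3 => Fin (![1, 1, 2] i))
local notation "K₁₂₂" => completeMultipartiteGraph (fun i : Fin 3 => Fin (![1, 2, 2] i))

theorem jgraph_four_isContained_K112 : Jgraph 4 ⊑ K₁₁₂ := by
  refine ⟨⟨⟨Sum.elim ![⟨0, (0 : Fin 1)⟩, ⟨1, (0 : Fin 1)⟩] (fun j => ⟨2, j⟩), ?_⟩, ?_⟩⟩
  · rintro (a | a) (b | b) ⟨hab, hr⟩ <;> fin_cases a <;> fin_cases b <;> simp_all
  · rintro (a | a) (b | b) h <;> fin_cases a <;> fin_cases b <;> first | rfl | revert h; decide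

theorem eArrows2_K122_K3_J3 : EArrows2 K₁₂₂ (Kc 3) (Jgraph 3) := by
  intro R _
  simp only [copies_univ_iff_isContained]
  by_contra h
  obtain ⟨hK3, hJ3⟩ := not_or.1 h
  have no_triangle {x y z} (hxy : R.Adj x y) (hxz : R.Adj x z) (hyz : R.Adj y z) : False :=
    hK3 (kc_three_isContained_of_adj hxy hxz hyz)
  have red_of_cherry {v x y} (hx : (K₁₂₂).Adj v x) (hy : (K₁₂₂).Adj v y) (hxy : x ≠ y) :
      R.Adj v x ∨ R.Adj v y := by
    by_contra! h
    exact hJ3 (jgraph_three_isContained_of_adj (G := K₁₂₂ \ R) ⟨hx, h.1⟩ ⟨hy, h.2⟩ hxy)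
  have no_apex {z x x' y} (hyx : (K₁₂₂).Adj y x) (hyx' : (K₁₂₂).Adj y x') (hxx' : x ≠ x')
      (hzx : R.Adj z x) (hzx' : R.Adj z x') (hzy : R.Adj z y) : False := by
    rcases red_of_cherry hyx hyx' hxx' with h | h
    exacts [no_triangle hzx hzy h.symm, no_triangle hzx' hzy h.symm]
  let z : Σ i, Fin (![1, 2, 2] i) := ⟨0, (0 : Fin 1)⟩
  let a (j : Fin 2) : Σ i, Fin (![1, 2, 2] i) := ⟨1, j⟩
  let b (j : Fin 2) : Σ i, Fin (![1, 2, 2] i) := ⟨2, j⟩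
  have hza (j) : (K₁₂₂).Adj z (a j) := by simp [z, a]
  have hzb (j) : (K₁₂₂).Adj z (b j) := by simp [z, b]
  have hab (i j) : (K₁₂₂).Adj (a i) (b j) := by simp [a, b]
  have ha : a 0 ≠ a 1 := by decide
  have hb : b 0 ≠ b 1 := by decide
  -- `z` has at most one blue edge, so one of the parts `a`, `b` is joined to `z` entirely in red
  -- and the other contains a vertex joined to `z` in red: `no_apex` applies.
  by_cases hA : ∀ i, R.Adj z (a i)
  · obtain ⟨j, hj⟩ : ∃ j, R.Adj z (b j) := Fin.exists_fin_two.2 (red_of_cherry (hzb 0) (hzb 1) hb)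
    exact no_apex (hab 0 j).symm (hab 1 j).symm ha (hA 0) (hA 1) hj
  · push Not at hA
    obtain ⟨i, hi⟩ := hA
    have hB (j) : R.Adj z (b j) := (red_of_cherry (hza i) (hzb j) (hab i j).ne).resolve_left hi
    obtain ⟨i', hi'⟩ : ∃ i, R.Adj z (a i) := Fin.exists_fin_two.2 (red_of_cherry (hza 0) (hza 1) ha)
    exact no_apex (hab i' 0) (hab i' 1) hb (hB 0) (hB 1) hi'

theorem graphJoin_kc_one_eArrows2 {α : Type*} {H : SimpleGraph α}
    (harr : VArrows2 H K₁₁₂ K₁₂₂) : EArrows2 (graphJoin (Kc 1) H) (Kc 3) (Jgraph 4) := by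
  classical
  intro R _
  simp only [copies_univ_iff_isContained]
  let u : Fin 1 ⊕ α := .inl 0
  let red : (R.comap Sum.inr).Copy R := (Embedding.comap .inr R).toCopy
  let blue : (H \ R.comap Sum.inr).Copy (graphJoin (Kc 1) H \ R) :=
    ⟨⟨Sum.inr, fun h => ⟨graphJoin_adj_inr_inr.2 h.1, h.2⟩⟩, Sum.inr_injective⟩
  rcases harr (fun v => R.Adj u (.inr v)) with hK112 | hK122
  · rcases hK112.exists_adj_or_sdiff (R.comap Sum.inr) with ⟨x, hx, y, hy, hxy⟩ | hblue
    · exact .inl (kc_three_isContained_of_adj (by simpa using hx) (by simpa using hy) hxy)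
    · have := (hblue.of_isContained jgraph_four_isContained_K112).mono_set (Set.subset_univ _)
      exact .inr ((copies_univ_iff_isContained.1 this).trans ⟨blue⟩)
  · rcases eArrows2_K122_K3_J3.copies_of_copies hK122 (R.comap Sum.inr) with hK3 | hJ3
    · exact .inl ((copies_univ_iff_isContained.1 (hK3.mono_set (Set.subset_univ _))).trans ⟨red⟩)
    · have : Copies (H \ R.comap Sum.inr) (Jgraph 3)
          (blue ⁻¹' (graphJoin (Kc 1) H \ R).neighborSet u) :=
        hJ3.mono_set fun v hv => ⟨graphJoin_adj_inl_inr _ _, by simpa [blue] using hv⟩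
      exact .inr <|
        (jgraph_add_three_isContained_graphJoin 1).trans (this.map blue).graphJoin_isContained

section Isomorphism

variable {α β γ δ : Type*} {G : SimpleGraph α} {G' : SimpleGraph β} {F₁ : SimpleGraph γ}
  {F₂ : SimpleGraph δ}

theorem VArrows2.of_iso (e : G ≃g G') (h : VArrows2 G F₁ F₂) : VArrows2 G' F₁ F₂ :=
  fun C => (h (C ∘ e)).imp (Copies.map e.toCopy) (Copies.map e.toCopy)

theorem EArrows2.of_iso (e : G ≃g G') (h : EArrows2 G F₁ F₂) : EArrows2 G' F₁ F₂ := by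
  intro R hR
  refine (h (R.comap e) fun a b hab => e.map_adj_iff.1 (hR hab)).imp
    (Copies.map (Embedding.comap e.toEquiv.toEmbedding R).toCopy) (Copies.map ?_)
  exact ⟨⟨e, fun h => ⟨e.map_adj_iff.2 h.1, h.2⟩⟩, e.injective⟩

end Isomorphism

theorem fe2_le_one_add_fv2 {α β γ β' γ' : Type*} [Fintype α] {F₁ : SimpleGraph β}
    {F₂ : SimpleGraph γ} {F₁' : SimpleGraph β'} {F₂' : SimpleGraph γ'} {k l : ℕ}
    (H : SimpleGraph α) (hH : H.CliqueFree l) (harr : VArrows2 H F₁' F₂')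
    (hjoin : ∀ {n : ℕ} (G : SimpleGraph (Fin n)), G.CliqueFree l → VArrows2 G F₁' F₂' →
      (graphJoin (Kc 1) G).CliqueFree k ∧ EArrows2 (graphJoin (Kc 1) G) F₁ F₂) :
    Fe2 F₁ F₂ k ≤ 1 + Fv2 F₁' F₂' l := by
  let e := Iso.map (Fintype.equivFin α) H
  obtain ⟨G, hG, hGarr⟩ := Nat.sInf_mem (s := {n | ∃ G : SimpleGraph (Fin n), G.CliqueFree l ∧
    VArrows2 G F₁' F₂'}) ⟨_, _, hH.comap e.symm.isContained, harr.of_iso e⟩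
  obtain ⟨hfree, hearr⟩ := hjoin G hG hGarr
  let e' := Iso.map finSumFinEquiv (graphJoin (Kc 1) G)
  exact Nat.sInf_le ⟨_, hfree.comap e'.symm.isContained, hearr.of_iso e'⟩

/-- If `H` is `K_4`-free and vertex-arrows `(K_{1,1,2},K_{1,2,2})`, then `K_1 + H` is
`K_5`-free and edge-arrows `(K_3,J_4)`; consequently
`F_e(K_3,J_4;5) ≤ 1 + F_v(K_{1,1,2},K_{1,2,2};4)`. -/
theorem join_K1_edge_arrows_K3_J4 {α : Type*} [Fintype α] (H : SimpleGraph α)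
    (hfree : H.CliqueFree 4)
    (harr : VArrows2 H (completeMultipartiteGraph (fun i : Fin 3 => Fin (![1, 1, 2] i)))
      (completeMultipartiteGraph (fun i : Fin 3 => Fin (![1, 2, 2] i)))) :
    (graphJoin (Kc 1) H).CliqueFree 5 ∧
    EArrows2 (graphJoin (Kc 1) H) (Kc 3) (Jgraph 4) ∧
    Fe2 (Kc 3) (Jgraph 4) 5 ≤
      1 + Fv2 (completeMultipartiteGraph (fun i : Fin 3 => Fin (![1, 1, 2] i)))
        (completeMultipartiteGraph (fun i : Fin 3 => Fin (![1, 2, 2] i))) 4 :=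
  ⟨kc_one_cliqueFree_two.graphJoin hfree, graphJoin_kc_one_eArrows2 harr,
    fe2_le_one_add_fv2 H hfree harr fun _ hG hGarr =>
      ⟨kc_one_cliqueFree_two.graphJoin hG, graphJoin_kc_one_eArrows2 hGarr⟩⟩
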